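/- Let f_1,...,f_n be arithmetic functions, D_1,...,D_n continuous derivations of the arithmetic function ring, and k an integer such that Exp^k(f_i) is defined for all i. Then det(D_j f_i) = 0 if and only if det(D_j Exp^k(f_i)) = 0, where determinants are taken in the Dirichlet convolution ring. -/

import Mathlib

open ArithmeticFunction
open scoped Classical

/-- The embedding of `ℂ` into the Dirichlet ring of arithmetic functions,
sending `c` to the function with value `c` at `1` and `0` elsewhere. -/
noncomputable def CC : ℂ →+* ArithmeticFunction ℂ where
  toFun c := ⟨fun n => if n = 1 then c else 0, by simp⟩
  map_zero' := by ext n; simp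
  map_one' := by ext n; simp [ArithmeticFunction.one_apply]
  map_add' a b := by ext n; by_cases h : n = 1 <;> erw [ArithmeticFunction.add_apply] <;> simp [h]
  map_mul' a b := by
    ext n
    erw [ArithmeticFunction.mul_apply]
    by_cases h : n = 1
    · subst h
      rw [show Nat.divisorsAntidiagonal 1 = {(1,1)} from rfl]
      simp
    · rw [Finset.sum_eq_zero]
      · simp [h]
      · rintro ⟨d, e⟩ hde
        rw [Nat.mem_divisorsAntidiagonal] at hde
        rcases Decidable.eq_or_ne d 1 with hd | hd
        · have : e ≠ 1 := by rintro rfl; exact h (by simp [← hde.1, hd])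
          simp [this]
        · simp [hd]

/-- The order `v f` of an arithmetic function: the least element of the support
(`sInf` of the empty set is `0` for `f = 0`; that case is always excluded by hypotheses). -/
noncomputable def ordN (f : ArithmeticFunction ℂ) : ℕ := sInf {n : ℕ | f n ≠ 0}

/-- The order as an extended natural number, `⊤` for `f = 0`. -/
noncomputable def ordE (f : ArithmeticFunction ℂ) : ℕ∞ :=
  sInf ((fun n : ℕ => (n : ℕ∞)) '' {n : ℕ | f n ≠ 0})

/-- The norm `‖f‖ = 1/v(f)`, with `1/∞ = 0`. -/
noncomputable def nrm (f : ArithmeticFunction ℂ) : ℝ :=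
  if f = 0 then 0 else 1 / (ordN f : ℝ)

/-- Extension of an arithmetic function to `ℝ`, vanishing off `ℕ`. -/
noncomputable def extR (f : ArithmeticFunction ℂ) (x : ℝ) : ℂ :=
  if h : ∃ n : ℕ, (n : ℝ) = x then f h.choose else 0

/-- The exponential map `Exp f = exp(f 1) * ∑ (f - f 1)^k / k!` of the Dirichlet ring.
Since `(f - f 1)^k` has order `≥ 2^k`, the value of the infinite series at `n` equals the
value of the partial sum up to `k = n`. -/
noncomputable def ExpA (f : ArithmeticFunction ℂ) : ArithmeticFunction ℂ :=
  ⟨fun n => Complex.exp (f 1) *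
      ((∑ k ∈ Finset.range (n + 1),
        CC ((Nat.factorial k : ℂ)⁻¹) * (f - CC (f 1)) ^ k) n), by simp⟩

/-- The `p`-basic derivation `(∂_p f) n = v_p (n p) • f (n p)`. -/
noncomputable def DP (p : ℕ) (f : ArithmeticFunction ℂ) : ArithmeticFunction ℂ :=
  ⟨fun n => (padicValNat p (n * p) : ℂ) * f (n * p), by simp⟩

/-- The log-derivation `(∂_L f) n = log n * f n`. -/
noncomputable def DL (f : ArithmeticFunction ℂ) : ArithmeticFunction ℂ :=
  ⟨fun n => (Real.log n : ℂ) * f n, by simp⟩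

/-- The pointwise multiplication operator `𝔪_g`. -/
noncomputable def MG (g f : ArithmeticFunction ℂ) : ArithmeticFunction ℂ :=
  ⟨fun n => g n * f n, by simp⟩

/-- Integer powers `𝔪_g^i` of the pointwise multiplication operator:
`(𝔪_g^i f) n = (g n)^i * f n`. -/
noncomputable def MGi (g : ArithmeticFunction ℂ) (i : ℤ) (f : ArithmeticFunction ℂ) :
    ArithmeticFunction ℂ := ⟨fun n => g n ^ i * f n, by simp⟩

/-- `D` is a (ℂ-linear) derivation of the ring of arithmetic functions
under Dirichlet convolution. -/
def IsDerivationA (D : ArithmeticFunction ℂ → ArithmeticFunction ℂ) : Prop :=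
  (∀ f g, D (f + g) = D f + D g) ∧
  (∀ (c : ℂ) (f), D (CC c * f) = CC c * D f) ∧
  (∀ f g, D (f * g) = D f * g + f * D g)

/-- Convergence of a sequence of arithmetic functions in the norm topology. -/
def TendstoA (s : ℕ → ArithmeticFunction ℂ) (l : ArithmeticFunction ℂ) : Prop :=
  Filter.Tendsto (fun m => nrm (s m - l)) Filter.atTop (nhds 0)

/-- (Sequential) continuity of a map in the norm topology, which for this
ultrametric is equivalent to continuity. -/
def ContinuousA (D : ArithmeticFunction ℂ → ArithmeticFunction ℂ) : Prop :=
  ∀ (s : ℕ → ArithmeticFunction ℂ) (l), TendstoA s l → TendstoA (fun m => D (s m)) (D l)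

/-- The indicator function `e_m` of the singleton `{m}`. -/
noncomputable def En (m : ℕ) : ArithmeticFunction ℂ :=
  ⟨fun n => if 0 < n ∧ n = m then 1 else 0, by simp⟩

/-- The constant one arithmetic function `𝟙`. -/
noncomputable def OneA : ArithmeticFunction ℂ := ⟨fun n => if n = 0 then 0 else 1, by simp⟩

/-- The ℂ-algebra structure of the ring of arithmetic functions, via `CC`. -/
noncomputable instance : Algebra ℂ (ArithmeticFunction ℂ) := CC.toAlgebra

/-!
A continuous derivation `D` satisfies `D (Exp f) = Exp f * D f`: the partial sums of the
exponential series converge to `Exp f` in the norm topology (they agree with it below their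
length), the Leibniz rule differentiates them termwise, and limits are unique. Hence the matrix
`(D_j (Exp f_i))` is `diag (Exp f_i) * (D_j f_i)`. Since `(Exp f_i) 1 = exp (f_i 1) ≠ 0` and the
Dirichlet ring over `ℂ` has no zero divisors, the two determinants vanish together, and iterating
handles every `k`.
-/

open Finset
open scoped Nat

namespace ArithmeticFunction

variable {R : Type*}

theorem sub_apply [AddGroup R] (f g : ArithmeticFunction R) (n : ℕ) :
    (f - g) n = f n - g n := by
  rw [sub_eq_add_neg, add_apply, neg_apply, ← sub_eq_add_neg]

theorem sum_apply [AddCommMonoid R] {ι : Type*} (s : Finset ι) (f : ι → ArithmeticFunction R)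
    (n : ℕ) : (∑ i ∈ s, f i) n = ∑ i ∈ s, f i n :=
  map_sum (⟨⟨fun f => f n, rfl⟩, fun _ _ => rfl⟩ : ArithmeticFunction R →+ R) f s

instance [Semiring R] [Nontrivial R] : Nontrivial (ArithmeticFunction R) :=
  ⟨0, 1, fun h => by simpa using congrArg (· 1) h⟩

def VanishesBelow [Zero R] (N : ℕ) (f : ArithmeticFunction R) : Prop := ∀ n < N, f n = 0

theorem VanishesBelow.mono [Zero R] {M N : ℕ} {f : ArithmeticFunction R} (hf : VanishesBelow N f)
    (h : M ≤ N) : VanishesBelow M f :=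
  fun n hn => hf n (hn.trans_le h)

theorem VanishesBelow.mul_right [Semiring R] {N : ℕ} {f : ArithmeticFunction R}
    (hf : VanishesBelow N f) (g : ArithmeticFunction R) : VanishesBelow N (f * g) := by
  intro n hn
  rw [mul_apply]
  refine sum_eq_zero fun ⟨d, e⟩ hde => ?_
  have hdn : d ≤ n := Nat.divisor_le (Nat.fst_mem_divisors_of_mem_antidiagonal hde)
  rw [hf d (hdn.trans_lt hn), zero_mul]

/- Since `f 1 = 0`, only divisor pairs `d * e = n` with `d ≥ 2`, hence `e ≤ n / 2`,
contribute to `(f * f ^ k) n`. -/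
theorem vanishesBelow_pow [Semiring R] {f : ArithmeticFunction R} (hf : f 1 = 0) (k : ℕ) :
    VanishesBelow (k + 1) (f ^ k) := by
  induction k with
  | zero =>
    intro n hn
    obtain rfl : n = 0 := by omega
    exact ArithmeticFunction.map_zero
  | succ k ih =>
    intro n hn
    rw [pow_succ', mul_apply]
    refine sum_eq_zero fun ⟨d, e⟩ hde => ?_
    obtain ⟨rfl, hn0⟩ := Nat.mem_divisorsAntidiagonal.1 hde
    rcases Nat.lt_or_ge d 2 with hd | hd
    · obtain rfl | rfl : d = 0 ∨ d = 1 := by omega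
      · simp at hn0
      · rw [hf, zero_mul]
    · have : e < k + 1 := by nlinarith
      rw [ih e this, mul_zero]

theorem mul_apply_mul_of_vanishesBelow [Semiring R] {f g : ArithmeticFunction R} {a b : ℕ}
    (hf : VanishesBelow a f) (hg : VanishesBelow b g) : (f * g) (a * b) = f a * g b := by
  rw [mul_apply, sum_eq_single (a, b)]
  · rintro ⟨d, e⟩ hde hne
    obtain ⟨hde, hab⟩ := Nat.mem_divisorsAntidiagonal.1 hde
    rcases Nat.lt_or_ge d a with hd | hd
    · rw [hf d hd, zero_mul]
    rcases Nat.lt_or_ge e b with he | he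
    · rw [hg e he, mul_zero]
    have ha : 0 < a := Nat.pos_of_ne_zero (left_ne_zero_of_mul hab)
    have hb : 0 < b := Nat.pos_of_ne_zero (right_ne_zero_of_mul hab)
    have heb : e = b := by nlinarith
    have hda : d = a := by subst heb; nlinarith
    exact absurd (by rw [hda, heb]) hne
  · intro hab
    simp only [Nat.mem_divisorsAntidiagonal, true_and, ne_eq, not_not] at hab
    rcases mul_eq_zero.1 hab with rfl | rfl <;> simp

instance [Semiring R] [NoZeroDivisors R] : NoZeroDivisors (ArithmeticFunction R) := by
  refine ⟨fun {f g} hfg => or_iff_not_imp_left.2 fun hf => ?_⟩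
  by_contra hg
  have hf' : ∃ n, f n ≠ 0 := by by_contra! h; exact hf (ext h)
  have hg' : ∃ n, g n ≠ 0 := by by_contra! h; exact hg (ext h)
  have hmin (h : ArithmeticFunction R) (hh : ∃ n, h n ≠ 0) : VanishesBelow (Nat.find hh) h :=
    fun n hn => not_not.1 (Nat.find_min hh hn)
  have := mul_apply_mul_of_vanishesBelow (hmin f hf') (hmin g hg')
  rw [hfg, zero_apply, eq_comm] at this
  exact mul_ne_zero (Nat.find_spec hf') (Nat.find_spec hg') this

end ArithmeticFunction

theorem CC_apply (c : ℂ) (n : ℕ) : CC c n = if n = 1 then c else 0 := rfl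

theorem CC_mul_apply (c : ℂ) (f : ArithmeticFunction ℂ) (n : ℕ) : (CC c * f) n = c * f n := by
  rcases Nat.eq_zero_or_pos n with rfl | hn
  · simp
  rw [mul_apply, sum_eq_single (1, n)]
  · simp [CC_apply]
  · rintro ⟨d, e⟩ hde hne
    obtain ⟨hde, -⟩ := Nat.mem_divisorsAntidiagonal.1 hde
    have hd : d ≠ 1 := by rintro rfl; exact hne (by simp_all)
    simp [CC_apply, hd]
  · simp [hn.ne']

theorem apply_ordN_ne_zero {f : ArithmeticFunction ℂ} (hf : f ≠ 0) : f (ordN f) ≠ 0 := by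
  obtain ⟨n, hn⟩ : ∃ n, f n ≠ 0 := by by_contra! h; exact hf (ext h)
  exact Nat.sInf_mem (s := {n | f n ≠ 0}) ⟨n, hn⟩

theorem ordN_pos {f : ArithmeticFunction ℂ} (hf : f ≠ 0) : 0 < ordN f :=
  Nat.pos_of_ne_zero fun h => apply_ordN_ne_zero hf (h ▸ ArithmeticFunction.map_zero)

theorem nrm_nonneg (f : ArithmeticFunction ℂ) : 0 ≤ nrm f := by
  unfold nrm; split_ifs <;> positivity

theorem apply_eq_zero_of_nrm_lt {f : ArithmeticFunction ℂ} {N : ℕ} (h : nrm f < 1 / N) :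
    f N = 0 := by
  unfold nrm at h
  split_ifs at h with hf
  · simp [hf]
  have hlt : N < ordN f := by
    by_contra! hle
    exact h.not_ge (one_div_le_one_div_of_le (by exact_mod_cast ordN_pos hf) (by exact_mod_cast hle))
  exact not_not.1 (Nat.notMem_of_lt_sInf hlt)

theorem nrm_le_of_vanishesBelow {f : ArithmeticFunction ℂ} {N : ℕ} (hN : 0 < N)
    (hf : VanishesBelow N f) : nrm f ≤ 1 / N := by
  unfold nrm
  split_ifs with h0
  · positivity
  have hNf : N ≤ ordN f := by
    by_contra! hlt
    exact apply_ordN_ne_zero h0 (hf _ hlt)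
  exact one_div_le_one_div_of_le (by exact_mod_cast hN) (by exact_mod_cast hNf)

theorem TendstoA.eventually_apply_eq {s : ℕ → ArithmeticFunction ℂ} {l : ArithmeticFunction ℂ}
    (h : TendstoA s l) (N : ℕ) : ∀ᶠ m in Filter.atTop, s m N = l N := by
  rcases Nat.eq_zero_or_pos N with rfl | hN
  · simp
  filter_upwards [h.eventually (gt_mem_nhds (by positivity : (0 : ℝ) < 1 / N))] with m hm
  rw [← sub_eq_zero, ← ArithmeticFunction.sub_apply]
  exact apply_eq_zero_of_nrm_lt hm

theorem TendstoA.unique {s : ℕ → ArithmeticFunction ℂ} {a b : ArithmeticFunction ℂ}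
    (ha : TendstoA s a) (hb : TendstoA s b) : a = b :=
  ext fun N =>
    let ⟨_, ha, hb⟩ := ((ha.eventually_apply_eq N).and (hb.eventually_apply_eq N)).exists
    ha.symm.trans hb

theorem tendstoA_of_vanishesBelow {s : ℕ → ArithmeticFunction ℂ} {l : ArithmeticFunction ℂ}
    (h : ∀ m, VanishesBelow m (s m - l)) : TendstoA s l := by
  refine squeeze_zero' (.of_forall fun m => nrm_nonneg _) ?_ tendsto_one_div_atTop_nhds_zero_nat
  filter_upwards [Filter.eventually_gt_atTop 0] with m hm
  exact nrm_le_of_vanishesBelow hm (h m)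

noncomputable def expPartialSum (f : ArithmeticFunction ℂ) (m : ℕ) : ArithmeticFunction ℂ :=
  ∑ k ∈ range m, CC (k ! : ℂ)⁻¹ * f ^ k

theorem ExpA_apply (f : ArithmeticFunction ℂ) (n : ℕ) :
    ExpA f n = Complex.exp (f 1) * expPartialSum (f - CC (f 1)) (n + 1) n :=
  rfl

theorem expPartialSum_apply_of_lt {f : ArithmeticFunction ℂ} (hf : f 1 = 0) {m n : ℕ}
    (hnm : n < m) : expPartialSum f m n = expPartialSum f (n + 1) n := by
  simp only [expPartialSum, ArithmeticFunction.sum_apply]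
  refine (sum_subset (range_subset_range.2 hnm) fun k hkm hkn => ?_).symm
  rw [CC_mul_apply, vanishesBelow_pow hf k n (by simp at hkn; omega), mul_zero]

theorem sub_CC_apply_one (f : ArithmeticFunction ℂ) : (f - CC (f 1)) 1 = 0 := by
  simp [ArithmeticFunction.sub_apply, CC_apply]

theorem vanishesBelow_CC_mul_expPartialSum_sub_ExpA (f : ArithmeticFunction ℂ) (m : ℕ) :
    VanishesBelow m
      (CC (Complex.exp (f 1)) * expPartialSum (f - CC (f 1)) m - ExpA f) := fun n hn => by
  rw [ArithmeticFunction.sub_apply, CC_mul_apply, ExpA_apply,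
    expPartialSum_apply_of_lt (sub_CC_apply_one f) hn, sub_self]

theorem ExpA_apply_one (f : ArithmeticFunction ℂ) : ExpA f 1 = Complex.exp (f 1) := by
  simp [ExpA_apply, expPartialSum, sum_range_succ, sub_CC_apply_one]

theorem ExpA_ne_zero (f : ArithmeticFunction ℂ) : ExpA f ≠ 0 := fun h =>
  Complex.exp_ne_zero (f 1) (by rw [← ExpA_apply_one, h, ArithmeticFunction.zero_apply])

namespace IsDerivationA

variable {D : ArithmeticFunction ℂ → ArithmeticFunction ℂ}

theorem map_sub (hD : IsDerivationA D) (f g : ArithmeticFunction ℂ) : D (f - g) = D f - D g :=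
  _root_.map_sub (AddMonoidHom.mk' D hD.1) f g

theorem map_sum (hD : IsDerivationA D) {ι : Type*} (s : Finset ι) (f : ι → ArithmeticFunction ℂ) :
    D (∑ i ∈ s, f i) = ∑ i ∈ s, D (f i) :=
  _root_.map_sum (AddMonoidHom.mk' D hD.1) f s

theorem map_one (hD : IsDerivationA D) : D 1 = 0 := by
  simpa using hD.2.2 1 1

theorem map_CC (hD : IsDerivationA D) (c : ℂ) : D (CC c) = 0 := by
  simpa [hD.map_one] using hD.2.1 c 1

theorem map_pow_succ (hD : IsDerivationA D) (f : ArithmeticFunction ℂ) (k : ℕ) :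
    D (f ^ (k + 1)) = (k + 1 : ℕ) * f ^ k * D f := by
  induction k with
  | zero => simp
  | succ k ih =>
    rw [pow_succ, hD.2.2, ih]
    push_cast
    ring

theorem map_expPartialSum_succ (hD : IsDerivationA D) (f : ArithmeticFunction ℂ) (m : ℕ) :
    D (expPartialSum f (m + 1)) = expPartialSum f m * D f := by
  have hterm (k : ℕ) : D (CC ((k + 1)! : ℂ)⁻¹ * f ^ (k + 1)) = CC (k ! : ℂ)⁻¹ * f ^ k * D f := by
    have hcoef : ((k + 1)! : ℂ)⁻¹ * (k + 1 : ℕ) = (k ! : ℂ)⁻¹ := by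
      rw [Nat.factorial_succ]
      push_cast
      field_simp
    rw [hD.2.1, hD.map_pow_succ, ← map_natCast CC, ← hcoef, map_mul]
    ring
  rw [expPartialSum, hD.map_sum, sum_range_succ', expPartialSum, sum_mul]
  simp only [hterm, pow_zero, mul_one, hD.map_CC, add_zero]

theorem map_ExpA (hD : IsDerivationA D) (hc : ContinuousA D) (f : ArithmeticFunction ℂ) :
    D (ExpA f) = ExpA f * D f := by
  set S := fun m => CC (Complex.exp (f 1)) * expPartialSum (f - CC (f 1)) m
  have hS : ∀ m, VanishesBelow m (S m - ExpA f) := vanishesBelow_CC_mul_expPartialSum_sub_ExpA f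
  have hDS (m : ℕ) : D (S (m + 1)) = S m * D f := by
    simp only [S, hD.2.1, hD.map_expPartialSum_succ, hD.map_sub, hD.map_CC, sub_zero, mul_assoc]
  have hlim : TendstoA (fun m => S (m + 1)) (ExpA f) :=
    tendstoA_of_vanishesBelow fun m => (hS (m + 1)).mono m.le_succ
  have hDlim : TendstoA (fun m => D (S (m + 1))) (ExpA f * D f) :=
    tendstoA_of_vanishesBelow fun m => by
      rw [hDS, ← sub_mul]
      exact (hS m).mul_right _
  exact (hc _ _ hlim).unique hDlim

end IsDerivationA

theorem det_map_ExpA_eq_zero_iff {ι : Type*} [Fintype ι] [DecidableEq ι]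
    (f : ι → ArithmeticFunction ℂ) (D : ι → ArithmeticFunction ℂ → ArithmeticFunction ℂ)
    (hD : ∀ j, IsDerivationA (D j)) (hc : ∀ j, ContinuousA (D j)) :
    Matrix.det (Matrix.of fun i j => D j (ExpA (f i))) = 0 ↔
      Matrix.det (Matrix.of fun i j => D j (f i)) = 0 := by
  have hdiag : (Matrix.of fun i j => D j (ExpA (f i))) =
      Matrix.diagonal (fun i => ExpA (f i)) * Matrix.of fun i j => D j (f i) := by
    ext i j
    simp [Matrix.diagonal_mul, (hD j).map_ExpA (hc j)]
  rw [hdiag, Matrix.det_mul, Matrix.det_diagonal,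
    mul_eq_zero_iff_left (prod_ne_zero_iff.2 fun i _ => ExpA_ne_zero (f i))]

theorem det_map_iterate_ExpA_eq_zero_iff {ι : Type*} [Fintype ι] [DecidableEq ι]
    (D : ι → ArithmeticFunction ℂ → ArithmeticFunction ℂ)
    (hD : ∀ j, IsDerivationA (D j)) (hc : ∀ j, ContinuousA (D j)) (m : ℕ)
    (f : ι → ArithmeticFunction ℂ) :
    Matrix.det (Matrix.of fun i j => D j (ExpA^[m] (f i))) = 0 ↔
      Matrix.det (Matrix.of fun i j => D j (f i)) = 0 := by
  induction m generalizing f with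
  | zero => rfl
  | succ m ih =>
    simp only [Function.iterate_succ_apply]
    exact (ih fun i => ExpA (f i)).trans (det_map_ExpA_eq_zero_iff f D hD hc)

/-- For continuous derivations `D_1, …, D_n` and an integer `k` such that `Exp^k (f i)` is
defined (`g i` denotes `Exp^k (f i)`, which for negative `k` means an iterated Rearick
logarithm, i.e. `Exp^[-k] (g i) = f i`), we have
`det (D_j (f i)) = 0 ↔ det (D_j (Exp^k (f i))) = 0`. -/
theorem stmt6 (n : ℕ) (f g : Fin n → ArithmeticFunction ℂ)
    (D : Fin n → ArithmeticFunction ℂ → ArithmeticFunction ℂ)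
    (hD : ∀ j, IsDerivationA (D j) ∧ ContinuousA (D j)) (k : ℤ)
    (hk : (0 ≤ k ∧ ∀ i, g i = ExpA^[k.toNat] (f i)) ∨
          (k < 0 ∧ ∀ i, ExpA^[(-k).toNat] (g i) = f i)) :
    Matrix.det (Matrix.of fun i j => D j (f i)) = 0 ↔
      Matrix.det (Matrix.of fun i j => D j (g i)) = 0 := by
  have hiter := det_map_iterate_ExpA_eq_zero_iff D (fun j => (hD j).1) (fun j => (hD j).2)
  rcases hk with ⟨-, hg⟩ | ⟨-, hf⟩
  · obtain rfl : g = fun i => ExpA^[k.toNat] (f i) := funext hg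
    exact (hiter _ f).symm
  · obtain rfl : f = fun i => ExpA^[(-k).toNat] (g i) := funext fun i => (hf i).symm
    exact hiter _ g
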